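/- Let 0 ≤ a ≤ p^s − 1 and let C be the ideal of S generated by u²(x − δ_{0,0})^a. Then Tor_0(C) and Tor_1(C) are the zero ideal of F[x]/⟨(x − δ_{0,0})^{p^s}⟩ (so the torsional degrees T_0(C) and T_1(C) both equal p^s), Tor_2(C) = ⟨(x − δ_{0,0})^a⟩ (so T_2(C) = a), and C has exactly p^{m(p^s − a)} elements. -/

import Mathlib

open Polynomial

/-- The finite chain ring `R^t = 𝔽_{p^m}[u]/⟨u^t⟩`. -/
abbrev Rt (p m t : ℕ) [Fact p.Prime] : Type _ :=
  Polynomial (GaloisField p m) ⧸ Ideal.span {(X : Polynomial (GaloisField p m)) ^ t}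

noncomputable instance (p m t : ℕ) [Fact p.Prime] : CommRing (Rt p m t) :=
  Ideal.Quotient.commRing _

/-- The canonical projection `𝔽_{p^m}[u] → R^t`. -/
noncomputable def mkRt (p m t : ℕ) [Fact p.Prime] :
    Polynomial (GaloisField p m) →+* Rt p m t :=
  Ideal.Quotient.mk _

/-- The element `u ∈ R^t`. -/
noncomputable def uRt (p m t : ℕ) [Fact p.Prime] : Rt p m t := mkRt p m t X

/-- The canonical embedding `𝔽_{p^m} → R^t`. -/
noncomputable def κ (p m t : ℕ) [Fact p.Prime] : GaloisField p m →+* Rt p m t :=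
  (mkRt p m t).comp (C : GaloisField p m →+* Polynomial (GaloisField p m))

/-- The quotient ring `R^t[x]/⟨x^N − δ⟩`. -/
abbrev Qr (p m t : ℕ) [Fact p.Prime] (N : ℕ) (δ : Rt p m t) : Type _ :=
  Polynomial (Rt p m t) ⧸ Ideal.span {(X : Polynomial (Rt p m t)) ^ N - C δ}

/-- The canonical projection `R^t[x] → R^t[x]/⟨x^N − δ⟩`. -/
noncomputable def mkQr (p m t : ℕ) [Fact p.Prime] (N : ℕ) (δ : Rt p m t) :
    Polynomial (Rt p m t) →+* Qr p m t N δ :=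
  Ideal.Quotient.mk _

/-- The ring `S = R³[x]/⟨x^{p^s} − δ⟩` where `δ = δ₀ + u²δ₂`. -/
abbrev Sdel (p m s : ℕ) [Fact p.Prime] (d0 d2 : GaloisField p m) : Type _ :=
  Qr p m 3 (p ^ s) (mkRt p m 3 (C d0 + C d2 * X ^ 2))

/-- The ring `𝔽_{p^m}[x]/⟨(x − δ_{0,0})^{p^s}⟩`. -/
abbrev Qbar (p m s : ℕ) [Fact p.Prime] (δ00 : GaloisField p m) : Type _ :=
  Polynomial (GaloisField p m) ⧸
    Ideal.span {((X : Polynomial (GaloisField p m)) - C δ00) ^ p ^ s}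

/-- The canonical projection onto `𝔽_{p^m}[x]/⟨(x − δ_{0,0})^{p^s}⟩`. -/
noncomputable def mkQbar (p m s : ℕ) [Fact p.Prime] (δ00 : GaloisField p m) :
    Polynomial (GaloisField p m) →+* Qbar p m s δ00 :=
  Ideal.Quotient.mk _

/-- Reduction modulo `u`, as a ring homomorphism `R³ → 𝔽_{p^m}`. -/
noncomputable def pi0 (p m : ℕ) [Fact p.Prime] : Rt p m 3 →+* GaloisField p m :=
  Ideal.Quotient.lift _ (evalRingHom (0 : GaloisField p m)) (by
    intro f hf
    rw [Ideal.mem_span_singleton] at hf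
    obtain ⟨c, rfl⟩ := hf
    simp)

/-- The reduction-mod-`u` homomorphism `μ : S → 𝔽_{p^m}[x]/⟨(x − δ_{0,0})^{p^s}⟩`. -/
noncomputable def muS (p m s : ℕ) [Fact p.Prime] (d0 d2 δ00 : GaloisField p m)
    (hδ00 : δ00 ^ p ^ s = d0) : Sdel p m s d0 d2 →+* Qbar p m s δ00 :=
  Ideal.Quotient.lift _ ((mkQbar p m s δ00).comp (mapRingHom (pi0 p m))) (by
    intro f hf
    rw [Ideal.mem_span_singleton] at hf
    obtain ⟨c, rfl⟩ := hf
    rw [map_mul]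
    have h1 : pi0 p m (mkRt p m 3 (C d0 + C d2 * X ^ 2)) = d0 := by
      show Ideal.Quotient.lift _ _ _ (Ideal.Quotient.mk _ _) = d0
      rw [Ideal.Quotient.lift_mk]
      simp
    have h2 : ((mkQbar p m s δ00).comp (mapRingHom (pi0 p m)))
        (X ^ p ^ s - C (mkRt p m 3 (C d0 + C d2 * X ^ 2))) = 0 := by
      rw [RingHom.comp_apply, coe_mapRingHom, Polynomial.map_sub, Polynomial.map_pow,
        Polynomial.map_X, Polynomial.map_C, h1]
      have h3 : ((X : Polynomial (GaloisField p m)) - C δ00) ^ p ^ s = X ^ p ^ s - C d0 := by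
        rw [sub_pow_char_pow, ← Polynomial.C_pow, hδ00]
      show mkQbar p m s δ00 _ = 0
      unfold mkQbar
      rw [Ideal.Quotient.eq_zero_iff_mem, Ideal.mem_span_singleton, h3]
    rw [h2, zero_mul])

/-- The element `u ∈ S`. -/
noncomputable def uS (p m s : ℕ) [Fact p.Prime] (d0 d2 : GaloisField p m) :
    Sdel p m s d0 d2 :=
  mkQr p m 3 (p ^ s) (mkRt p m 3 (C d0 + C d2 * X ^ 2)) (C (uRt p m 3))

/-- The element `x − δ_{0,0} ∈ S`. -/
noncomputable def θS (p m s : ℕ) [Fact p.Prime] (d0 d2 δ00 : GaloisField p m) :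
    Sdel p m s d0 d2 :=
  mkQr p m 3 (p ^ s) (mkRt p m 3 (C d0 + C d2 * X ^ 2)) (X - C (κ p m 3 δ00))

/-!
`S` is free over `R³ = 𝔽[u]/⟨u³⟩` with basis `1, x, …, x^{p^s-1}`, so in `S`, as in `R³`, the
annihilator of `u` is `u²S` and that of `u²` is `uS`. Every element of `S` is `g(x) + u·t` with
`g ∈ 𝔽[x]`; since `u³ = 0`, the ideal `C = ⟨u²(x − δ₀₀)^a⟩` is `{u²(x − δ₀₀)^a g(x)}`. In
characteristic `p`, `(x − δ₀₀)^{p^s} = x^{p^s} − δ₀ = u²δ₂`, so `u²g(x) = 0` iff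
`(x − δ₀₀)^{p^s} ∣ g`. Hence `g ↦ u²(x − δ₀₀)^a g(x)` induces an additive isomorphism
`𝔽[x]/⟨(x − δ₀₀)^{p^s−a}⟩ ≃ C`, which gives `|C|`; the torsion ideals are read off after
reducing modulo `u`.
-/

theorem pow_dvd_pow_mul_iff_of_ne_zero {M : Type*} [CommMonoidWithZero M] [IsCancelMulZero M]
    {x : M} (hx : x ≠ 0) (a n : ℕ) (g : M) : x ^ n ∣ x ^ a * g ↔ x ^ (n - a) ∣ g := by
  rcases le_total a n with h | h
  · rw [← Nat.sub_add_cancel h, pow_add, Nat.add_sub_cancel, mul_comm (x ^ (n - a)),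
      mul_dvd_mul_iff_left (pow_ne_zero a hx)]
  · simp only [Nat.sub_eq_zero_of_le h, pow_zero, one_dvd, iff_true]
    exact (pow_dvd_pow x h).mul_right g

theorem Polynomial.mk_X_pow_dvd_of_mk_X_pow_mul_eq_zero {R : Type*} [CommRing R] {n i : ℕ}
    (hi : i ≤ n) {r : R[X] ⧸ Ideal.span {(X : R[X]) ^ n}}
    (h : Ideal.Quotient.mk _ X ^ i * r = 0) : Ideal.Quotient.mk _ X ^ (n - i) ∣ r := by
  obtain ⟨f, rfl⟩ := Ideal.Quotient.mk_surjective r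
  rw [← map_pow, ← map_mul, Ideal.Quotient.eq_zero_iff_mem, Ideal.mem_span_singleton] at h
  obtain ⟨g, hg⟩ := h
  have hf : f = X ^ (n - i) * g := (isRegular_X_pow i).left <| by
    simp only [hg, ← mul_assoc, ← pow_add, Nat.add_sub_cancel' hi]
  exact ⟨Ideal.Quotient.mk _ g, by rw [hf, map_mul, map_pow]⟩

theorem AdjoinRoot.of_dvd_of_of_mul_eq_zero {R : Type*} [CommRing R] {g : R[X]} (hg : g.Monic)
    {w z : R} (hwz : ∀ r : R, w * r = 0 → z ∣ r) {c : AdjoinRoot g} (h : of g w * c = 0) :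
    of g z ∣ c := by
  classical
  let b := (AdjoinRoot.powerBasis' hg).basis
  have hrepr : ∀ i, w * b.repr c i = 0 := fun i => by
    rw [← smul_eq_mul, ← Finsupp.smul_apply, ← map_smul, Algebra.smul_def, algebraMap_eq, h,
      map_zero, Finsupp.zero_apply]
  choose e he using fun i => hwz _ (hrepr i)
  refine ⟨∑ i, e i • b i, ?_⟩
  conv_lhs => rw [← b.sum_repr c]
  simp only [he, Finset.mul_sum, mul_smul, ← algebraMap_eq, ← Algebra.smul_def]

theorem Polynomial.natCard_quotient_span_singleton {K : Type*} [Field K] [Finite K] {f : K[X]}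
    (hf : f ≠ 0) : Nat.card (K[X] ⧸ Ideal.span {f}) = Nat.card K ^ f.natDegree := by
  have := (AdjoinRoot.powerBasis hf).finite
  show Nat.card (AdjoinRoot f) = _
  rw [Module.natCard_eq_pow_finrank (K := K), (AdjoinRoot.powerBasis hf).finrank,
    AdjoinRoot.powerBasis_dim]

theorem natCard_span_singleton_eq_pow_natDegree {S K : Type*} [CommRing S] [Field K] [Finite K]
    (β : K[X] →+* S) {c : S} {q : K[X]} (hq : q ≠ 0)
    (hrange : ∀ t, ∃ g, c * t = c * β g) (hker : ∀ g, c * β g = 0 ↔ q ∣ g) :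
    Nat.card (Ideal.span {c}) = Nat.card K ^ q.natDegree := by
  let φ : K[X] →+ S := (AddMonoidHom.mulLeft c).comp β.toAddMonoidHom
  have hφrange : (Ideal.span {c} : Set S) = φ.range := by
    ext x
    simp only [SetLike.mem_coe, Ideal.mem_span_singleton, AddMonoidHom.mem_range]
    constructor
    · rintro ⟨t, rfl⟩
      obtain ⟨g, hg⟩ := hrange t
      exact ⟨g, hg.symm⟩
    · rintro ⟨g, rfl⟩
      exact ⟨β g, rfl⟩
  have hφker : φ.ker = (Ideal.span {q}).toAddSubgroup := by
    ext g
    exact (hker g).trans Ideal.mem_span_singleton.symm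
  rw [← natCard_quotient_span_singleton hq]
  calc Nat.card (Ideal.span {c}) = Nat.card φ.range := Nat.card_congr (Equiv.setCongr hφrange)
    _ = Nat.card (K[X] ⧸ φ.ker) := Nat.card_congr (QuotientAddGroup.quotientKerEquivRange φ).symm
    _ = _ := by rw [hφker]; rfl

section
variable {p m s : ℕ} [Fact p.Prime] {d0 d2 δ00 : GaloisField p m}

theorem uRt_dvd_sub_κ_pi0 (r : Rt p m 3) : uRt p m 3 ∣ r - κ p m 3 (pi0 p m r) := by
  obtain ⟨f, rfl⟩ := Ideal.Quotient.mk_surjective r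
  refine ⟨mkRt p m 3 f.divX, ?_⟩
  show mkRt p m 3 f - mkRt p m 3 (C (f.eval 0)) = mkRt p m 3 X * mkRt p m 3 f.divX
  rw [← map_sub, ← map_mul, ← coeff_zero_eq_eval_zero, sub_eq_iff_eq_add.mpr
    (X_mul_divX_add f).symm]

theorem pi0_κ (e : GaloisField p m) : pi0 p m (κ p m 3 e) = e := eval_C

theorem pi0_uRt : pi0 p m (uRt p m 3) = 0 := eval_X

noncomputable def βS (p m s : ℕ) [Fact p.Prime] (d0 d2 : GaloisField p m) :
    Polynomial (GaloisField p m) →+* Sdel p m s d0 d2 :=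
  (mkQr p m 3 (p ^ s) (mkRt p m 3 (C d0 + C d2 * X ^ 2))).comp (mapRingHom (κ p m 3))

local notation "𝐮" => uS p m s d0 d2
local notation "𝛉" => θS p m s d0 d2 δ00
local notation "𝛃" => βS p m s d0 d2

theorem βS_C (e : GaloisField p m) : 𝛃 (C e) = mkQr p m 3 (p ^ s) _ (C (κ p m 3 e)) := by
  rw [βS, RingHom.comp_apply, coe_mapRingHom, Polynomial.map_C]

theorem uS_pow_dvd_of_uS_pow_mul_eq_zero {i : ℕ} (hi : i ≤ 3) {c : Sdel p m s d0 d2}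
    (h : 𝐮 ^ i * c = 0) : 𝐮 ^ (3 - i) ∣ c := by
  have hg := monic_X_pow_sub_C (mkRt p m 3 (C d0 + C d2 * X ^ 2))
    (pow_ne_zero s (Fact.out : p.Prime).ne_zero)
  have := AdjoinRoot.of_dvd_of_of_mul_eq_zero hg (w := uRt p m 3 ^ i) (z := uRt p m 3 ^ (3 - i))
    (fun _ => mk_X_pow_dvd_of_mk_X_pow_mul_eq_zero hi) (c := c) (by rw [map_pow]; exact h)
  rwa [map_pow] at this

theorem uS_sq_dvd_of_uS_mul_eq_zero {c : Sdel p m s d0 d2} (h : 𝐮 * c = 0) : 𝐮 ^ 2 ∣ c :=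
  uS_pow_dvd_of_uS_pow_mul_eq_zero (i := 1) (by norm_num) (by rwa [pow_one])

theorem uS_dvd_of_uS_sq_mul_eq_zero {c : Sdel p m s d0 d2} (h : 𝐮 ^ 2 * c = 0) : 𝐮 ∣ c := by
  simpa using uS_pow_dvd_of_uS_pow_mul_eq_zero (i := 2) (by norm_num) h

theorem uS_pow_three : 𝐮 ^ 3 = 0 := by
  have huRt : uRt p m 3 ^ 3 = 0 :=
    Ideal.Quotient.eq_zero_iff_mem.mpr (Ideal.mem_span_singleton_self _)
  rw [uS, ← map_pow, ← C_pow, huRt, C_0, map_zero]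

theorem exists_uS_dvd_sub_βS (t : Sdel p m s d0 d2) : ∃ g, 𝐮 ∣ t - 𝛃 g := by
  obtain ⟨F, rfl⟩ := Ideal.Quotient.mk_surjective t
  refine ⟨F.map (pi0 p m), ?_⟩
  obtain ⟨G, hG⟩ : C (uRt p m 3) ∣ F - (F.map (pi0 p m)).map (κ p m 3) := by
    rw [C_dvd_iff_dvd_coeff]
    intro i
    rw [coeff_sub, coeff_map, coeff_map]
    exact uRt_dvd_sub_κ_pi0 _
  exact ⟨mkQr p m 3 (p ^ s) _ G, by rw [uS, ← map_mul, ← hG]; rfl⟩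

theorem θS_eq_βS : 𝛉 = 𝛃 (X - C δ00) := by
  simp [βS, θS, κ]

variable (hδ00 : δ00 ^ p ^ s = d0)
local notation "𝛍" => muS p m s d0 d2 δ00 hδ00

theorem muS_mkQr (f : Polynomial (Rt p m 3)) :
    𝛍 (mkQr p m 3 (p ^ s) _ f) = mkQbar p m s δ00 (f.map (pi0 p m)) := rfl

theorem muS_βS (g : Polynomial (GaloisField p m)) : 𝛍 (𝛃 g) = mkQbar p m s δ00 g := by
  rw [βS, RingHom.comp_apply, coe_mapRingHom, muS_mkQr, Polynomial.map_map,
    show (pi0 p m).comp (κ p m 3) = RingHom.id _ from RingHom.ext pi0_κ, Polynomial.map_id]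

theorem muS_uS : 𝛍 𝐮 = 0 := by
  rw [uS, muS_mkQr, map_C, pi0_uRt, map_zero, map_zero]

theorem muS_θS : 𝛍 𝛉 = mkQbar p m s δ00 (X - C δ00) := by
  rw [θS_eq_βS, muS_βS]

theorem muS_eq_zero_of_uS_dvd {c : Sdel p m s d0 d2} (h : 𝐮 ∣ c) : 𝛍 c = 0 := by
  obtain ⟨t, rfl⟩ := h
  rw [map_mul, muS_uS, zero_mul]

include hδ00 in
theorem θS_pow_eq_uS_sq_mul_βS : 𝛉 ^ p ^ s = 𝐮 ^ 2 * 𝛃 (C d2) := by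
  -- Frobenius in `𝔽[x]`, then `x ^ p ^ s = δ₀ + u²δ₂` in `S`.
  have hfrob : (X - C δ00) ^ p ^ s = X ^ p ^ s - C d0 := by
    rw [sub_pow_char_pow, ← C_pow, hδ00]
  have hδ : C (mkRt p m 3 (C d0 + C d2 * X ^ 2)) =
      C (κ p m 3 d0) + C (uRt p m 3) ^ 2 * C (κ p m 3 d2) := by
    simp only [κ, uRt, RingHom.comp_apply, map_add, map_mul, map_pow, mul_comm]
  have hxN : 𝛃 X ^ p ^ s = 𝛃 (C d0) + 𝐮 ^ 2 * 𝛃 (C d2) := calc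
    𝛃 X ^ p ^ s = mkQr p m 3 (p ^ s) _ (X ^ p ^ s) := by
      rw [← map_pow, βS, RingHom.comp_apply, coe_mapRingHom, Polynomial.map_pow, map_X]
    _ = mkQr p m 3 (p ^ s) _ (C (mkRt p m 3 (C d0 + C d2 * X ^ 2))) :=
      Ideal.Quotient.eq.mpr (Ideal.mem_span_singleton_self _)
    _ = mkQr p m 3 (p ^ s) _ (C (κ p m 3 d0) + C (uRt p m 3) ^ 2 * C (κ p m 3 d2)) :=
      congrArg _ hδ
    _ = 𝛃 (C d0) + 𝐮 ^ 2 * 𝛃 (C d2) := by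
      rw [map_add (mkQr p m 3 (p ^ s) _), map_mul (mkQr p m 3 (p ^ s) _),
        map_pow (mkQr p m 3 (p ^ s) _), βS_C, βS_C]
      rfl
  rw [θS_eq_βS, ← map_pow, hfrob, map_sub, map_pow, hxN, add_sub_cancel_left]

include hδ00 in
theorem uS_sq_mul_βS_eq_zero_iff (g : Polynomial (GaloisField p m)) :
    𝐮 ^ 2 * 𝛃 g = 0 ↔ (X - C δ00) ^ p ^ s ∣ g := by
  constructor
  · intro h
    have := muS_eq_zero_of_uS_dvd hδ00 (uS_dvd_of_uS_sq_mul_eq_zero h)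
    rwa [muS_βS, mkQbar, Ideal.Quotient.eq_zero_iff_mem, Ideal.mem_span_singleton] at this
  · rintro ⟨h, rfl⟩
    rw [map_mul, map_pow, ← θS_eq_βS, θS_pow_eq_uS_sq_mul_βS hδ00]
    linear_combination (𝐮 * 𝛃 (C d2) * 𝛃 h) * (uS_pow_three : 𝐮 ^ 3 = 0)

-- `Ideal.mem_span_singleton` for the quotient-ring instance path that `Ideal.span` takes on `S`.
theorem mem_span_singleton_iff_dvd {x y : Sdel p m s d0 d2} : x ∈ Ideal.span {y} ↔ y ∣ x :=
  Ideal.mem_span_singleton (α := Sdel p m s d0 d2)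

theorem uS_dvd_of_mem_span {a : ℕ} {c : Sdel p m s d0 d2}
    (hc : c ∈ Ideal.span {𝐮 ^ 2 * 𝛉 ^ a}) : 𝐮 ∣ c :=
  ((dvd_pow_self 𝐮 two_ne_zero).mul_right _).trans (mem_span_singleton_iff_dvd.mp hc)

theorem uS_dvd_of_uS_mul_mem_span {a : ℕ} {c : Sdel p m s d0 d2}
    (hc : 𝐮 * c ∈ Ideal.span {𝐮 ^ 2 * 𝛉 ^ a}) : 𝐮 ∣ c := by
  obtain ⟨t, ht⟩ := mem_span_singleton_iff_dvd.mp hc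
  obtain ⟨d, hd⟩ := uS_sq_dvd_of_uS_mul_eq_zero (c := c - 𝐮 * 𝛉 ^ a * t)
    (by linear_combination ht)
  exact ⟨𝛉 ^ a * t + 𝐮 * d, by linear_combination hd⟩

theorem muS_image_eq_zero {T : Set (Sdel p m s d0 d2)} (hT : 0 ∈ T) (hu : ∀ c ∈ T, 𝐮 ∣ c) :
    𝛍 '' T = {0} :=
  Set.eq_singleton_iff_unique_mem.mpr
    ⟨⟨0, hT, map_zero _⟩, by rintro _ ⟨c, hc, rfl⟩; exact muS_eq_zero_of_uS_dvd hδ00 (hu c hc)⟩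

theorem muS_image_mem_span (a : ℕ) :
    𝛍 '' {c | c ∈ Ideal.span {𝐮 ^ 2 * 𝛉 ^ a}} = {0} :=
  muS_image_eq_zero hδ00 (Ideal.zero_mem (Ideal.span {𝐮 ^ 2 * 𝛉 ^ a}))
    fun _ => uS_dvd_of_mem_span

theorem muS_image_uS_mul_mem_span (a : ℕ) :
    𝛍 '' {c | 𝐮 * c ∈ Ideal.span {𝐮 ^ 2 * 𝛉 ^ a}} = {0} :=
  muS_image_eq_zero hδ00 (by rw [Set.mem_ofPred, mul_zero 𝐮]; exact Ideal.zero_mem _)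
    fun _ => uS_dvd_of_uS_mul_mem_span

theorem muS_image_uS_sq_mul_mem_span (a : ℕ) :
    𝛍 '' {c | 𝐮 ^ 2 * c ∈ Ideal.span {𝐮 ^ 2 * 𝛉 ^ a}} =
      ↑(Ideal.span {mkQbar p m s δ00 (X - C δ00) ^ a}) := by
  ext y
  simp only [Set.mem_image, Set.mem_ofPred, SetLike.mem_coe, Ideal.mem_span_singleton']
  constructor
  · rintro ⟨c, ⟨t, ht⟩, rfl⟩
    obtain ⟨d, hd⟩ := uS_dvd_of_uS_sq_mul_eq_zero (c := c - 𝛉 ^ a * t)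
      (by linear_combination -ht)
    have h := muS_eq_zero_of_uS_dvd hδ00 ⟨d, hd⟩
    rw [map_sub 𝛍, sub_eq_zero, map_mul 𝛍, map_pow 𝛍, muS_θS] at h
    exact ⟨𝛍 t, by rw [h, mul_comm]⟩
  · rintro ⟨q, rfl⟩
    obtain ⟨w, rfl⟩ := Ideal.Quotient.mk_surjective q
    exact ⟨𝛉 ^ a * 𝛃 w, ⟨𝛃 w, by ring⟩, by rw [map_mul, map_pow, muS_θS, muS_βS, mul_comm]; rfl⟩

include hδ00 in
theorem natCard_span_uS_sq_mul_θS_pow (hm : m ≠ 0) (a : ℕ) :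
    Nat.card (Ideal.span {𝐮 ^ 2 * 𝛉 ^ a}) = p ^ (m * (p ^ s - a)) := by
  have hθ : X - C δ00 ≠ 0 := X_sub_C_ne_zero δ00
  have key := natCard_span_singleton_eq_pow_natDegree 𝛃 (c := 𝐮 ^ 2 * 𝛉 ^ a)
    (pow_ne_zero (p ^ s - a) hθ) ?_ ?_
  · rw [key, GaloisField.card p m hm, natDegree_pow, natDegree_X_sub_C, mul_one, ← pow_mul]
  · intro t
    obtain ⟨g, t', ht'⟩ := exists_uS_dvd_sub_βS t
    exact ⟨g, by
      linear_combination (𝐮 ^ 2 * 𝛉 ^ a) * ht' + (𝛉 ^ a * t') * (uS_pow_three : 𝐮 ^ 3 = 0)⟩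
  · intro g
    rw [mul_assoc, θS_eq_βS, ← map_pow, ← map_mul, uS_sq_mul_βS_eq_zero_iff hδ00,
      pow_dvd_pow_mul_iff_of_ne_zero hθ]

end

theorem stmt_12 (p m s : ℕ) [Fact p.Prime] (hm : m ≠ 0)
    (d0 d2 : GaloisField p m)
    (δ00 : GaloisField p m) (hδ00 : δ00 ^ p ^ s = d0)
    (a : ℕ) :
    muS p m s d0 d2 δ00 hδ00 ''
        {c : Sdel p m s d0 d2 | c ∈ Ideal.span {uS p m s d0 d2 ^ 2 * θS p m s d0 d2 δ00 ^ a}} =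
      {0} ∧
    muS p m s d0 d2 δ00 hδ00 ''
        {c : Sdel p m s d0 d2 |
          uS p m s d0 d2 * c ∈ Ideal.span {uS p m s d0 d2 ^ 2 * θS p m s d0 d2 δ00 ^ a}} =
      {0} ∧
    muS p m s d0 d2 δ00 hδ00 ''
        {c : Sdel p m s d0 d2 |
          uS p m s d0 d2 ^ 2 * c ∈ Ideal.span {uS p m s d0 d2 ^ 2 * θS p m s d0 d2 δ00 ^ a}} =
      ↑(Ideal.span {mkQbar p m s δ00 ((X : Polynomial (GaloisField p m)) - C δ00) ^ a}) ∧
    Nat.card (Ideal.span {uS p m s d0 d2 ^ 2 * θS p m s d0 d2 δ00 ^ a}) =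
      p ^ (m * (p ^ s - a)) :=
  ⟨muS_image_mem_span hδ00 a, muS_image_uS_mul_mem_span hδ00 a,
    muS_image_uS_sq_mul_mem_span hδ00 a,
    natCard_span_uS_sq_mul_θS_pow hδ00 hm a⟩
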